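/- For a finite alphabet Σ, if F has Natarajan dimension N_d, then the growth function of the autoregressive 0-1 loss class satisfies Γ_{L(F^AR)}(n) ≤ (|Σ|²·n·T)^{N_d}, and hence VC(L(F^AR)) ≤ 3·N_d·log₂(2·N_d·|Σ|²·T/(e·ln 2)). -/

import Mathlib

/-!
Whether `f` makes an error on `(x, y)` depends only on the `T` predictions `f (x ++ y.take t)`,
`t < T`, because `arListG f x T = y` exactly when `y` is the list of these teacher-forced
predictions. Hence the labelings of `n` pairs are at most the behaviours of `F` on `n * T`
points, and Natarajan's lemma bounds those by `(|Σ|² n T) ^ N_d`. Natarajan's lemma goes by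
induction on the number of points: a class of vectors is counted by its restrictions to all but
the last point, plus, for each pair `a ≠ b` of last values, the restrictions extendable by both
`a` and `b`; the latter classes have smaller Natarajan dimension. Finally, shattering `m` points
forces `2 ^ m ≤ (|Σ|² m T) ^ N_d`, and `log z ≤ z / e` at a suitable `z` solves this for `m`.
-/

/-- Autoregressive unrolling over a general alphabet `S`. -/
def arListG {S : Type*} (f : List S → S) (x : List S) : ℕ → List S
  | 0 => []
  | T + 1 => arListG f x T ++ [f (x ++ arListG f x T)]

/-- The set of labelings a binary class realizes on `n` points. -/
def labelings {α : Type*} (H : Set (α → Bool)) {n : ℕ} (xs : Fin n → α) :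
    Set (Fin n → Bool) :=
  {v | ∃ h ∈ H, ∀ i, v i = h (xs i)}

/-- Growth function of a binary class. -/
noncomputable def growth {α : Type*} (H : Set (α → Bool)) (n : ℕ) : ℕ :=
  sSup {k | ∃ xs : Fin n → α, k = (labelings H xs).ncard}

/-- `H` shatters the points `xs` (binary). -/
def Shatters {α : Type*} (H : Set (α → Bool)) {n : ℕ} (xs : Fin n → α) : Prop :=
  ∀ v : Fin n → Bool, ∃ h ∈ H, ∀ i, h (xs i) = v i

/-- Natarajan shattering of the points `xs` by a multiclass class `F`. -/
def NShatters {S : Type*} (F : Set (List S → S)) {m : ℕ} (xs : Fin m → List S) : Prop :=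
  ∃ g0 g1 : Fin m → S, (∀ i, g0 i ≠ g1 i) ∧
    ∀ b : Fin m → Bool, ∃ f ∈ F, ∀ i, f (xs i) = if b i then g1 i else g0 i

/-- The Natarajan dimension of `F` is at most `Nd`. -/
def NdimLe {S : Type*} (F : Set (List S → S)) (Nd : ℕ) : Prop :=
  ∀ m (xs : Fin m → List S), NShatters F xs → m ≤ Nd

/-- The autoregressive 0-1 loss class over alphabet `S`. -/
def lossClassG {S : Type*} [DecidableEq S] (F : Set (List S → S)) (T : ℕ) :
    Set (List S × List S → Bool) :=
  {g | ∃ f ∈ F, g = fun p => decide (p.2 ≠ arListG f p.1 T)}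

theorem length_arListG {S : Type*} (f : List S → S) (x : List S) (T : ℕ) :
    (arListG f x T).length = T := by
  induction T with
  | zero => rfl
  | succ T ih => simp [arListG, ih]

theorem take_arListG {S : Type*} (f : List S → S) (x : List S) {t T : ℕ} (h : t ≤ T) :
    (arListG f x T).take t = arListG f x t := by
  induction T with
  | zero => rw [Nat.le_zero.mp h]; rfl
  | succ T ih =>
    rcases h.lt_or_eq with h | rfl
    · rw [arListG, List.take_append_of_le_length (by rw [length_arListG]; omega), ih (by omega)]
    · exact List.take_of_length_le (length_arListG f x _).le

theorem getElem_arListG {S : Type*} (f : List S → S) (x : List S) {t T : ℕ}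
    (h : t < (arListG f x T).length) :
    (arListG f x T)[t] = f (x ++ arListG f x t) := by
  induction T with
  | zero => simp [length_arListG] at h
  | succ T ih =>
    simp only [arListG, List.getElem_append, length_arListG]
    split_ifs with ht
    · exact ih _
    · simp [length_arListG] at h
      simp [show t = T by omega]

theorem arListG_eq_iff {S : Type*} (f : List S → S) (x y : List S) (T : ℕ) :
    arListG f x T = y ↔ y = List.ofFn (fun t : Fin T => f (x ++ y.take t)) := by
  constructor
  · rintro rfl
    refine List.ext_getElem (by simp [length_arListG]) fun t h _ => ?_
    rw [List.getElem_ofFn, getElem_arListG, take_arListG]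
    simp [length_arListG] at h
    omega
  · intro hy
    have hlen : y.length = T := by rw [hy, List.length_ofFn]
    have htake : ∀ t ≤ T, y.take t = arListG f x t := by
      intro t ht
      induction t with
      | zero => rfl
      | succ t ih =>
        rw [List.take_add_one, ih (by omega), List.getElem?_eq_getElem (by omega), arListG]
        simp only [Option.toList_some, List.getElem_of_eq hy, List.getElem_ofFn]
        rw [ih (by omega)]
    rw [← htake T le_rfl, List.take_of_length_le hlen.le]

theorem card_le_one_add_card_offDiag {α : Type*} [DecidableEq α] (s : Finset α) :
    s.card ≤ 1 + s.offDiag.card := by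
  rw [Finset.offDiag_card]
  rcases s.card with _ | n
  · simp
  · rw [Nat.succ_mul, Nat.add_sub_cancel]
    nlinarith

section Natarajan

variable {S : Type*}

def NatarajanShatters {ι : Type*} (V : Finset (ι → S)) (I : Finset ι) : Prop :=
  ∃ g₀ g₁ : ι → S, (∀ i ∈ I, g₀ i ≠ g₁ i) ∧
    ∀ b : ι → Bool, ∃ v ∈ V, ∀ i ∈ I, v i = if b i then g₁ i else g₀ i

theorem card_le_one_of_natarajanShatters_card_le_zero {ι : Type*} {V : Finset (ι → S)}
    (hV : ∀ I, NatarajanShatters V I → I.card ≤ 0) : V.card ≤ 1 := by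
  refine Finset.card_le_one.mpr fun v hv w hw => funext fun i => by_contra fun hne => ?_
  have : NatarajanShatters V {i} := ⟨v, w, by simpa using hne, fun b => by
    cases hb : b i
    · exact ⟨v, hv, by simp [hb]⟩
    · exact ⟨w, hw, by simp [hb]⟩⟩
  simpa using hV _ this

variable [DecidableEq S] {m : ℕ}

theorem NatarajanShatters.of_image_init {V : Finset (Fin (m + 1) → S)} {I : Finset (Fin m)}
    (h : NatarajanShatters (V.image Fin.init) I) :
    NatarajanShatters V (I.map Fin.castSuccEmb) := by
  obtain ⟨g₀, g₁, hne, hpat⟩ := h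
  obtain ⟨w, hw, -⟩ := hpat fun _ => true
  obtain ⟨v, -, -⟩ := Finset.mem_image.mp hw
  refine ⟨Fin.snoc g₀ (v (Fin.last m)), Fin.snoc g₁ (v (Fin.last m)), ?_, fun b => ?_⟩
  · simpa using hne
  · obtain ⟨w, hw, hwb⟩ := hpat (b ∘ Fin.castSucc)
    obtain ⟨v, hv, rfl⟩ := Finset.mem_image.mp hw
    exact ⟨v, hv, by simpa [Fin.init] using hwb⟩

def pairFiber (V : Finset (Fin (m + 1) → S)) (a b : S) : Finset (Fin m → S) :=
  (V.image Fin.init).filter fun w => Fin.snoc w a ∈ V ∧ Fin.snoc w b ∈ V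

theorem NatarajanShatters.of_pairFiber {V : Finset (Fin (m + 1) → S)} {I : Finset (Fin m)}
    {a b : S} (hab : a ≠ b) (h : NatarajanShatters (pairFiber V a b) I) :
    NatarajanShatters V (insert (Fin.last m) (I.map Fin.castSuccEmb)) := by
  obtain ⟨g₀, g₁, hne, hpat⟩ := h
  refine ⟨Fin.snoc g₀ a, Fin.snoc g₁ b, by simpa [hab] using hne, fun c => ?_⟩
  obtain ⟨w, hw, hwc⟩ := hpat (c ∘ Fin.castSucc)
  obtain ⟨-, hwa, hwb⟩ := Finset.mem_filter.mp hw
  refine ⟨Fin.snoc w (if c (Fin.last m) then b else a), by split_ifs <;> assumption, ?_⟩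
  simpa using hwc

variable [Fintype S]

theorem card_le_card_image_init_add_sum_card_pairFiber
    (V : Finset (Fin (m + 1) → S)) :
    V.card ≤ (V.image Fin.init).card +
      ∑ p ∈ (Finset.univ : Finset S).offDiag, (pairFiber V p.1 p.2).card := by
  set E : (Fin m → S) → Finset S := fun w => {c | Fin.snoc w c ∈ V}
  have hfiber : ∀ w, {v ∈ V | Fin.init v = w}.card = (E w).card := fun w =>
    Finset.card_nbij' (· (Fin.last m)) (fun c => Fin.snoc (α := fun _ => S) w c)
      (fun v hv => by obtain ⟨hv, rfl⟩ := Finset.mem_filter.mp hv; simpa [E])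
      (fun c hc => by simp_all [E])
      (fun v hv => by obtain ⟨-, rfl⟩ := Finset.mem_filter.mp hv; simp)
      (fun c _ => by simp)
  have hswap : ∑ w ∈ V.image Fin.init, (E w).offDiag.card =
      ∑ p ∈ (Finset.univ : Finset S).offDiag, (pairFiber V p.1 p.2).card := by
    have hoff : ∀ w, (E w).offDiag = {p ∈ (Finset.univ : Finset S).offDiag |
        Fin.snoc w p.1 ∈ V ∧ Fin.snoc w p.2 ∈ V} := by
      intro w
      ext p
      simp only [E, Finset.mem_offDiag, Finset.mem_filter, Finset.mem_univ, true_and]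
      tauto
    simp only [hoff, pairFiber, Finset.card_filter]
    exact Finset.sum_comm
  calc V.card = ∑ w ∈ V.image Fin.init, (E w).card := by
        rw [Finset.card_eq_sum_card_image Fin.init V]
        exact Finset.sum_congr rfl fun w _ => hfiber w
    _ ≤ ∑ w ∈ V.image Fin.init, (1 + (E w).offDiag.card) :=
        Finset.sum_le_sum fun w _ => card_le_one_add_card_offDiag _
    _ = _ := by rw [Finset.sum_add_distrib, hswap]; simp

theorem card_le_of_natarajanShatters_card_le {d : ℕ} (hm : 1 ≤ m) {V : Finset (Fin m → S)}
    (hV : ∀ I, NatarajanShatters V I → I.card ≤ d) :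
    V.card ≤ (Fintype.card S ^ 2 * m) ^ d := by
  induction m, hm using Nat.le_induction generalizing d with
  | base =>
    rcases d with _ | d
    · simpa using card_le_one_of_natarajanShatters_card_le_zero hV
    calc V.card ≤ Fintype.card S := by simpa using V.card_le_univ
      _ ≤ Fintype.card S ^ 2 * 1 := by nlinarith
      _ ≤ (Fintype.card S ^ 2 * 1) ^ (d + 1) := Nat.le_self_pow (by omega) _
  | succ m hm ih =>
    rcases d with _ | d
    · simpa using card_le_one_of_natarajanShatters_card_le_zero hV
    set y := Fintype.card S ^ 2
    have hinit : (V.image Fin.init).card ≤ (y * m) ^ (d + 1) := ih fun I hI => by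
      simpa using hV _ hI.of_image_init
    have hpair : ∀ p ∈ (Finset.univ : Finset S).offDiag,
        (pairFiber V p.1 p.2).card ≤ (y * m) ^ d := fun p hp => ih fun I hI => by
      simpa using hV _ (hI.of_pairFiber (Finset.mem_offDiag.mp hp).2.2)
    calc V.card ≤ (V.image Fin.init).card +
          ∑ p ∈ (Finset.univ : Finset S).offDiag, (pairFiber V p.1 p.2).card :=
          card_le_card_image_init_add_sum_card_pairFiber V
      _ ≤ (y * m) ^ (d + 1) + y * (y * m) ^ d := by
          gcongr
          refine (Finset.sum_le_card_nsmul _ _ _ hpair).trans (Nat.mul_le_mul_right _ ?_)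
          rw [Finset.offDiag_card, Finset.card_univ]
          exact (Nat.sub_le _ _).trans_eq (sq _).symm
      _ = (y * m) ^ d * (y * (m + 1)) := by ring
      _ ≤ (y * (m + 1)) ^ (d + 1) := by
          rw [pow_succ]
          gcongr
          omega

end Natarajan

section Behaviors
variable {S ι : Type*}

theorem NatarajanShatters.card_le_of_ndimLe [DecidableEq ι] {F : Set (List S → S)} {Nd : ℕ}
    (hF : NdimLe F Nd) {pts : ι → List S} {V : Finset (ι → S)}
    (hV : (V : Set (ι → S)) ⊆ (· ∘ pts) '' F) {I : Finset ι} (hI : NatarajanShatters V I) :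
    I.card ≤ Nd := by
  obtain ⟨g₀, g₁, hne, hpat⟩ := hI
  let e : Fin I.card ↪ ι := I.equivFin.symm.toEmbedding.trans (Function.Embedding.subtype _)
  have he : ∀ k, e k ∈ I := fun k => (I.equivFin.symm k).2
  refine hF _ (pts ∘ e) ⟨g₀ ∘ e, g₁ ∘ e, fun k => hne _ (he k), fun b => ?_⟩
  obtain ⟨v, hv, hvb⟩ := hpat (Function.extend e b fun _ => false)
  obtain ⟨f, hf, rfl⟩ := hV hv
  refine ⟨f, hf, fun k => ?_⟩
  simpa [e.injective.extend_apply] using hvb _ (he k)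

theorem ncard_image_comp_le [Fintype S] [Fintype ι] (hι : 1 ≤ Fintype.card ι)
    {F : Set (List S → S)} {Nd : ℕ} (hF : NdimLe F Nd) (pts : ι → List S) :
    ((· ∘ pts) '' F).ncard ≤ (Fintype.card S ^ 2 * Fintype.card ι) ^ Nd := by
  classical
  let e := Fintype.equivFin ι
  have hpts : (· ∘ pts) '' F = (· ∘ e) '' ((· ∘ (pts ∘ e.symm)) '' F) := by
    rw [Set.image_image]
    simp [Function.comp_assoc]
  set W := (· ∘ (pts ∘ e.symm)) '' F
  calc ((· ∘ pts) '' F).ncard ≤ W.ncard := hpts ▸ Set.ncard_image_le W.toFinite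
    _ = W.toFinset.card := Set.ncard_eq_toFinset_card' W
    _ ≤ _ := card_le_of_natarajanShatters_card_le hι fun I hI =>
      hI.card_le_of_ndimLe hF (pts := pts ∘ e.symm) (Set.coe_toFinset W).subset

end Behaviors

section LossClass
variable {S : Type*} [DecidableEq S]

theorem labelings_lossClassG_subset {n : ℕ} (F : Set (List S → S)) (T : ℕ)
    (zs : Fin n → List S × List S) :
    labelings (lossClassG F T) zs ⊆
      (fun w i => decide ((zs i).2 ≠ List.ofFn fun t => w (i, t))) ''
        ((· ∘ fun it : Fin n × Fin T => (zs it.1).1 ++ (zs it.1).2.take it.2) '' F) := by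
  rintro v ⟨-, ⟨f, hf, rfl⟩, hv⟩
  refine ⟨_, ⟨f, hf, rfl⟩, funext fun i => ?_⟩
  simp [hv, eq_comm (a := (zs i).2), arListG_eq_iff]

theorem ncard_labelings_lossClassG_le [Fintype S] {T Nd n : ℕ} (hT : 1 ≤ T) (hn : 1 ≤ n)
    {F : Set (List S → S)} (hF : NdimLe F Nd) (zs : Fin n → List S × List S) :
    (labelings (lossClassG F T) zs).ncard ≤ (Fintype.card S ^ 2 * n * T) ^ Nd := by
  calc (labelings (lossClassG F T) zs).ncard ≤ _ :=
        Set.ncard_le_ncard (labelings_lossClassG_subset F T zs) (Set.toFinite _)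
    _ ≤ _ := Set.ncard_image_le (Set.toFinite _)
    _ ≤ _ := ncard_image_comp_le (by simpa using Nat.mul_le_mul hn hT) hF _
    _ = (Fintype.card S ^ 2 * n * T) ^ Nd := by simp [mul_assoc]

end LossClass

section Shattering
variable {α : Type*}

theorem labelings_eq_univ_of_shatters {H : Set (α → Bool)} {m : ℕ} {zs : Fin m → α}
    (h : Shatters H zs) : labelings H zs = Set.univ :=
  Set.eq_univ_of_forall fun v => by
    obtain ⟨g, hg, hgv⟩ := h v
    exact ⟨g, hg, fun i => (hgv i).symm⟩

theorem ncard_labelings_of_shatters {H : Set (α → Bool)} {m : ℕ} {zs : Fin m → α}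
    (h : Shatters H zs) : (labelings H zs).ncard = 2 ^ m := by
  simp [labelings_eq_univ_of_shatters h, Set.ncard_univ]

end Shattering

open Real

theorem exp_one_mul_log_two_lt_two : exp 1 * log 2 < 2 := by
  have := exp_one_lt_d9
  have := log_two_lt_d9
  have := log_pos one_lt_two
  nlinarith [exp_pos 1]

theorem le_three_mul_logb_of_two_pow_le {m N : ℕ} {a : ℝ} (hm : 0 < m) (hN : 0 < N) (ha : 0 < a)
    (h : (2 : ℝ) ^ m ≤ (a * m) ^ N) :
    (m : ℝ) ≤ 3 * N * logb 2 (2 * N * a / (exp 1 * log 2)) := by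
  set K := 2 * N * a / (exp 1 * log 2)
  set z := exp 1 * log 2 * m / (2 * N)
  have hlog2 : 0 < log 2 := log_pos one_lt_two
  have hz : 0 < z := by positivity
  have hKz : K * z = a * m := by
    simp only [K, z]
    field_simp
  have hlog : m * log 2 ≤ N * (log K + log z) := by
    rw [← log_mul (by positivity) hz.ne', hKz, ← log_pow, ← log_pow]
    exact log_le_log (by positivity) h
  -- `log z ≤ z / e`, and `z / e` is chosen so that `N * log z` absorbs half of `m * log 2`
  have hlogz : N * log z ≤ m * log 2 / 2 := by
    have := log_le_sub_one_of_pos (show 0 < z / exp 1 by positivity)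
    rw [log_div hz.ne' (exp_pos 1).ne', log_exp] at this
    have hze : z / exp 1 = m * log 2 / (2 * N) := by
      simp only [z]
      field_simp
    calc N * log z ≤ N * (m * log 2 / (2 * N)) := by gcongr; linarith
      _ = m * log 2 / 2 := by field_simp
  have hK : m * log 2 / 2 ≤ N * log K := by nlinarith
  have hlogK : 0 ≤ N * logb 2 K := by
    rw [logb, mul_div_assoc']
    exact div_nonneg (by nlinarith) hlog2.le
  calc (m : ℝ) ≤ 2 * (N * logb 2 K) := by
        rw [logb, mul_div_assoc', mul_div_assoc', le_div_iff₀ hlog2]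
        linarith
    _ ≤ 3 * N * logb 2 K := by nlinarith

/-- for a finite alphabet `Σ` and Natarajan dimension `N_d`,
`Γ_{L(F^AR)}(n) ≤ (|Σ|²·n·T)^{N_d}` and hence
`VC(L(F^AR)) ≤ 3·N_d·log₂(2·N_d·|Σ|²·T/(e·ln 2))`. -/
theorem natarajan_growth_and_vc_bound
    (S : Type*) [Fintype S] [DecidableEq S]
    (T Nd n : ℕ) (hT : 1 ≤ T) (hNd : 1 ≤ Nd) (hn : 1 ≤ n)
    (F : Set (List S → S)) (hNdim : NdimLe F Nd) :
    growth (lossClassG F T) n ≤ (Fintype.card S ^ 2 * n * T) ^ Nd ∧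
    ∀ m (zs : Fin m → List S × List S), Shatters (lossClassG F T) zs →
      (m : ℝ) ≤ 3 * Nd * Real.logb 2
        (2 * Nd * (Fintype.card S : ℝ) ^ 2 * T / (Real.exp 1 * Real.log 2)) := by
  refine ⟨csSup_le' ?_, fun m zs hzs => ?_⟩
  · rintro _ ⟨zs, rfl⟩
    exact ncard_labelings_lossClassG_le hT hn hNdim zs
  obtain ⟨-, ⟨f, -, -⟩, -⟩ := hzs fun _ => true
  have hS : 1 ≤ Fintype.card S := Fintype.card_pos_iff.mpr ⟨f []⟩
  rcases m.eq_zero_or_pos with rfl | hm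
  · have hK : 1 ≤ 2 * Nd * (Fintype.card S : ℝ) ^ 2 * T / (exp 1 * log 2) := by
      rw [one_le_div (by positivity)]
      refine exp_one_mul_log_two_lt_two.le.trans ?_
      have : (1 : ℝ) ≤ Nd * (Fintype.card S : ℝ) ^ 2 * T := by
        exact_mod_cast Nat.one_le_iff_ne_zero.mpr (by positivity)
      linarith
    simpa using mul_nonneg (by positivity) (logb_nonneg one_lt_two hK)
  · have hcount := (ncard_labelings_of_shatters hzs).symm.trans_le
      (ncard_labelings_lossClassG_le hT hm hNdim zs)
    have := le_three_mul_logb_of_two_pow_le hm hNd (a := Fintype.card S ^ 2 * T)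
      (by positivity) (by rw [mul_right_comm]; exact_mod_cast hcount)
    simpa [mul_assoc] using this
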